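/- The relational system (nwd(2^ω), ⊆, nwd(2^ω)) of nowhere dense subsets of Cantor space ordered by inclusion is Galois-Tukey equivalent to both the almost-refinement system Part*(ℂ_ω) and the refinement system Part(ℂ_ω) of the Cohen algebra. -/

import Mathlib

/-- A relational system `⟨A₋, A, A₊⟩`. -/
structure RelSys : Type 1 where
  Dom : Type
  Cod : Type
  Rel : Dom → Cod → Prop

/-- The dominating number `𝔡(A)` of a relational system. -/
noncomputable def dNum (S : RelSys) : Cardinal :=
  sInf { c | ∃ Y : Set S.Cod, Cardinal.mk Y = c ∧ ∀ x : S.Dom, ∃ y ∈ Y, S.Rel x y }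

/-- The bounding number `𝔟(A)` of a relational system. -/
noncomputable def bNum (S : RelSys) : Cardinal :=
  sInf { c | ∃ X : Set S.Dom, Cardinal.mk X = c ∧ ∀ y : S.Cod, ∃ x ∈ X, ¬ S.Rel x y }

/-- A generalized Galois–Tukey connection from `S` to `T` (`S ≤_T T`). -/
def GT (S T : RelSys) : Prop :=
  ∃ (φm : S.Dom → T.Dom) (φp : T.Cod → S.Cod),
    ∀ a b, T.Rel (φm a) b → S.Rel a (φp b)

/-- Galois–Tukey equivalence. -/
def GTequiv (S T : RelSys) : Prop := GT S T ∧ GT T S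

/-- The σ-version `A^σ` of a relational system. -/
def sigmaSys (S : RelSys) : RelSys :=
  ⟨S.Dom, ℕ → S.Cod, fun a f => ∃ n, S.Rel a (f n)⟩

/-- Sequential composition `A;B` of relational systems. -/
def seqComp (S T : RelSys) : RelSys :=
  ⟨S.Dom × (S.Cod → T.Dom), S.Cod × T.Cod,
   fun p q => S.Rel p.1 q.1 ∧ T.Rel (p.2 q.1) q.2⟩

/-- An antichain in a Boolean algebra: pairwise disjoint nonzero elements. -/
def BAAntichain {α : Type} [BooleanAlgebra α] (A : Set α) : Prop :=
  (∀ a ∈ A, a ≠ ⊥) ∧ ∀ a ∈ A, ∀ b ∈ A, a ≠ b → a ⊓ b = ⊥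

/-- A maximal antichain in a Boolean algebra. -/
def MaxAC {α : Type} [BooleanAlgebra α] (A : Set α) : Prop :=
  BAAntichain A ∧ ∀ b : α, b ≠ ⊥ → ∃ a ∈ A, a ⊓ b ≠ ⊥

/-- The countable chain condition. -/
def CCC (α : Type) [BooleanAlgebra α] : Prop :=
  ∀ A : Set α, BAAntichain A → A.Countable

/-- `C` refines `A` (written `A ≤ C`): every element of `C` is below some element of `A`. -/
def Refines {α : Type} [BooleanAlgebra α] (A C : Set α) : Prop :=
  ∀ c ∈ C, ∃ a ∈ A, c ≤ a

/-- `C` almost refines `A` (written `A ≤* C`). -/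
def AlmostRefines {α : Type} [BooleanAlgebra α] (A C : Set α) : Prop :=
  ∃ F : Finset α, ↑F ⊆ A ∧ Refines ((A \ ↑F) ∪ {F.sup id}) C

/-- The set of maximal antichains of `α`. -/
def PartT (α : Type) [BooleanAlgebra α] : Type := {A : Set α // MaxAC A}

/-- The refinement relational system `Part(α)`. -/
def PartSys (α : Type) [BooleanAlgebra α] : RelSys :=
  ⟨PartT α, PartT α, fun A C => Refines A.1 C.1⟩

/-- The almost-refinement relational system `Part*(α)`. -/
def PartStar (α : Type) [BooleanAlgebra α] : RelSys :=
  ⟨PartT α, PartT α, fun A C => AlmostRefines A.1 C.1⟩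

/-- The eventual domination relational system `(ωω, ≤*, ωω)`. -/
def domSys : RelSys :=
  ⟨ℕ → ℕ, ℕ → ℕ, fun f g => ∀ᶠ n in Filter.atTop, f n ≤ g n⟩

/-- Quotients of Boolean rings are Boolean rings. -/
instance quotBooleanRing (R : Type) [BooleanRing R] (I : Ideal R) :
    BooleanRing (R ⧸ I) :=
  { (inferInstance : CommRing (R ⧸ I)) with
    isIdempotentElem := fun a => by
      obtain ⟨x, rfl⟩ := Ideal.Quotient.mk_surjective a
      unfold IsIdempotentElem
      rw [← map_mul, BooleanRing.mul_self] }

/-- The quotient of a Boolean algebra by an ideal (presented as a ring ideal of the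
associated Boolean ring), again viewed as a Boolean algebra. -/
def quotAlg (α : Type) [BooleanAlgebra α] (I : Ideal (AsBoolRing α)) : Type :=
  AsBoolAlg (AsBoolRing α ⧸ I)

noncomputable instance quotAlgBA (α : Type) [BooleanAlgebra α] (I : Ideal (AsBoolRing α)) :
    BooleanAlgebra (quotAlg α I) :=
  inferInstanceAs (BooleanAlgebra (AsBoolAlg (AsBoolRing α ⧸ I)))

/-- The quotient map from a Boolean algebra to its quotient algebra. -/
def quotCls {α : Type} [BooleanAlgebra α] (I : Ideal (AsBoolRing α)) (a : α) : quotAlg α I :=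
  toBoolAlg (Ideal.Quotient.mk I (toBoolRing a))

/-- The ideal of finite subsets of `ω`, as a ring ideal of `P(ω)`. -/
def finIdeal : Ideal (AsBoolRing (Set ℕ)) where
  carrier := {x | (ofBoolRing x : Set ℕ).Finite}
  zero_mem' := by simp [ofBoolRing_zero, Set.bot_eq_empty]
  add_mem' := by
    intro a b ha hb
    simpa [ofBoolRing_add] using ((ha.union hb).subset (Set.symmDiff_subset_union))
  smul_mem' := by
    intro c x hx
    simpa [smul_eq_mul, ofBoolRing_mul] using hx.subset (by simp [Set.inf_eq_inter])

/-- `P(ω)/fin`. -/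
def PomegaFin : Type := quotAlg (Set ℕ) finIdeal

noncomputable instance : BooleanAlgebra PomegaFin := quotAlgBA _ _

/-- The ideal `Fin` of the product algebra `ωB`: functions with finite support. -/
def finSuppIdeal (B : Type) [BooleanAlgebra B] : Ideal (AsBoolRing (ℕ → B)) where
  carrier := {x | {n | (ofBoolRing x : ℕ → B) n ≠ ⊥}.Finite}
  zero_mem' := by simp [ofBoolRing_zero]
  add_mem' := by
    intro a b ha hb
    refine ((ha.union hb).subset ?_)
    intro n hn
    simp only [ofBoolRing_add, Pi.symmDiff_apply, Set.mem_setOf_eq] at hn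
    by_contra h
    simp only [Set.mem_union, Set.mem_setOf_eq] at h
    push_neg at h
    simp [h.1, h.2] at hn
  smul_mem' := by
    intro c x hx
    refine hx.subset ?_
    intro n hn
    simp only [smul_eq_mul, ofBoolRing_mul, Pi.inf_apply, Set.mem_setOf_eq] at hn
    simp only [Set.mem_setOf_eq]
    intro h
    simp [h] at hn

/-- The reduced power `ωB/Fin` of a Boolean algebra `B`. -/
def redPow (B : Type) [BooleanAlgebra B] : Type := quotAlg (ℕ → B) (finSuppIdeal B)

noncomputable instance (B : Type) [BooleanAlgebra B] : BooleanAlgebra (redPow B) := quotAlgBA _ _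

abbrev Cantor : Type := ℕ → Bool

/-- The basic clopen set `N_s` determined by a finite binary sequence `s`. -/
def cyl (s : List Bool) : Set Cantor := {f | ∀ i, i < s.length → f i = s.getD i false}

lemma cyl_measurable (s : List Bool) : MeasurableSet (cyl s) := by
  have h : cyl s = ⋂ i ∈ Finset.range s.length, (fun f : Cantor => f i) ⁻¹' {s.getD i false} := by
    ext f
    simp [cyl]
  rw [h]
  exact Finset.measurableSet_biInter _ fun i _ => (measurable_pi_apply i) (by trivial)

/-- The σ-ideal of meagre subsets of Cantor space. -/
def MeagreSets : Set (Set Cantor) := {s | IsMeagre s}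

/-- `cof(ℳ)`: the cofinality of the meagre ideal of Cantor space. -/
noncomputable def cofM : Cardinal :=
  sInf { c | ∃ F : Set (Set Cantor), (∀ s ∈ F, IsMeagre s) ∧
    (∀ s : Set Cantor, IsMeagre s → ∃ t ∈ F, s ⊆ t) ∧ Cardinal.mk F = c }

/-- `add(ℳ)`: the additivity of the meagre ideal of Cantor space. -/
noncomputable def addM : Cardinal :=
  sInf { c | ∃ F : Set (Set Cantor), (∀ s ∈ F, IsMeagre s) ∧
    ¬ IsMeagre (⋃₀ F) ∧ Cardinal.mk F = c }

/-- The Borel subsets of Cantor space, as a Boolean algebra of sets. -/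
abbrev BorelSets : Type := {s : Set Cantor // MeasurableSet s}

lemma IsMeagre.union' {X : Type} [TopologicalSpace X] {s t : Set X}
    (hs : IsMeagre s) (ht : IsMeagre t) : IsMeagre (s ∪ t) := by
  rw [IsMeagre, Set.compl_union]; exact Filter.inter_mem hs ht

/-- The ideal of meagre Borel sets, as a ring ideal of the Boolean ring of Borel sets. -/
noncomputable def meagreIdeal : Ideal (AsBoolRing BorelSets) where
  carrier := {x | IsMeagre ((ofBoolRing x : BorelSets) : Set Cantor)}
  zero_mem' := by
    show IsMeagre ((ofBoolRing (0 : AsBoolRing BorelSets) : BorelSets) : Set Cantor)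
    rw [ofBoolRing_zero]
    simpa using IsMeagre.empty
  add_mem' := by
    intro a b ha hb
    show IsMeagre ((ofBoolRing (a + b) : BorelSets) : Set Cantor)
    rw [ofBoolRing_add]
    refine (ha.union' hb).mono ?_
    have h : ((symmDiff (ofBoolRing a) (ofBoolRing b) : BorelSets) : Set Cantor)
        = symmDiff ((ofBoolRing a : BorelSets) : Set Cantor) ((ofBoolRing b : BorelSets) : Set Cantor) := rfl
    rw [h]
    exact symmDiff_le_sup
  smul_mem' := by
    intro c x hx
    show IsMeagre ((ofBoolRing (c • x) : BorelSets) : Set Cantor)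
    rw [smul_eq_mul, ofBoolRing_mul]
    refine hx.mono ?_
    have : ((ofBoolRing c ⊓ ofBoolRing x : BorelSets) : Set Cantor)
        = ((ofBoolRing c : BorelSets) : Set Cantor) ∩ (ofBoolRing x : BorelSets) := rfl
    rw [this]
    exact Set.inter_subset_right

/-- The Cohen algebra `ℂ_ω = Borel(2^ω)/meagre`. -/
def CohenAlg : Type := quotAlg BorelSets meagreIdeal

noncomputable instance : BooleanAlgebra CohenAlg := quotAlgBA _ _

/-- The equivalence class `[X]` of a Borel set in the Cohen algebra. -/
noncomputable def cohenCls (X : BorelSets) : CohenAlg := quotCls meagreIdeal X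

/-- The class `[N_s]` of a basic clopen set in the Cohen algebra. -/
noncomputable def cylC (s : List Bool) : CohenAlg := cohenCls ⟨cyl s, cyl_measurable s⟩

/-- The system of nowhere dense subsets of Cantor space ordered by inclusion. -/
def NwdCantorSys : RelSys :=
  ⟨{s : Set Cantor // IsNowhereDense s}, {s : Set Cantor // IsNowhereDense s},
   fun a b => a.1 ⊆ b.1⟩

/-! Maximal antichains of `ℂ_ω` and nowhere dense sets are translated into each other through the
basic clopen cylinders `N_s`. Since a Borel set is open modulo a meagre set, every nonzero element
of `ℂ_ω` lies above some `[N_s]`. Hence the maximal cylinders inside an open dense set form a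
maximal antichain, and the cylinders lying below a maximal antichain cover an open dense set.

A nowhere dense `s` is sent to the antichain of maximal cylinders avoiding `closure s`; a finite
join of these is still the class of a closed set avoiding `closure s`, which is what makes the
connection work for almost refinement. A maximal antichain `A` is sent to the closure of the
leftmost points of the minimal cylinders below `A`, a nowhere dense set; a cylinder avoiding it
must lie below some element of `A`. Refinement implies almost refinement, which closes the cycle
`nwd ≤ Part* ≤ Part ≤ nwd`. -/

open Set TopologicalSpace

section QuotientAlgebra

variable {α : Type} [BooleanAlgebra α] (I : Ideal (AsBoolRing α))

def quotClsHom : BoundedLatticeHom α (quotAlg α I) :=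
  (Ideal.Quotient.mk I).asBoolAlg.comp
    ((OrderIso.asBoolAlgAsBoolRing α).symm : BoundedLatticeHom α (AsBoolAlg (AsBoolRing α)))

lemma quotClsHom_apply (a : α) : quotClsHom I a = quotCls I a := rfl

variable {I}

lemma quotCls_surjective : Function.Surjective (quotCls I) := fun c =>
  let ⟨x, hx⟩ := Ideal.Quotient.mk_surjective (ofBoolAlg c)
  ⟨ofBoolRing x, congrArg toBoolAlg hx⟩

lemma quotCls_eq_bot_iff {a : α} : quotCls I a = ⊥ ↔ toBoolRing a ∈ I :=
  toBoolAlg_inj.trans Ideal.Quotient.eq_zero_iff_mem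

lemma quotCls_le_iff {a b : α} : quotCls I a ≤ quotCls I b ↔ toBoolRing (a \ b) ∈ I := by
  rw [← quotCls_eq_bot_iff, ← quotClsHom_apply, ← quotClsHom_apply, ← quotClsHom_apply,
    map_sdiff, sdiff_eq_bot_iff]

end QuotientAlgebra

lemma GT.trans {S T U : RelSys} (hST : GT S T) (hTU : GT T U) : GT S U :=
  let ⟨f, g, hfg⟩ := hST
  let ⟨f', g', hfg'⟩ := hTU
  ⟨f' ∘ f, g ∘ g', fun a b h => hfg a (g' b) (hfg' (f a) b h)⟩

lemma Refines.almostRefines {α : Type} [BooleanAlgebra α] {A C : Set α} (h : Refines A C) :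
    AlmostRefines A C :=
  ⟨∅, by simp, fun c hc =>
    let ⟨a, ha, hca⟩ := h c hc
    ⟨a, Or.inl ⟨ha, by simp⟩, hca⟩⟩

lemma gt_partStar_partSys (α : Type) [BooleanAlgebra α] : GT (PartStar α) (PartSys α) :=
  ⟨id, id, fun _ _ => Refines.almostRefines⟩

def pt (s : List Bool) : Cantor := fun i => s.getD i false

lemma pt_mem_cyl (s : List Bool) : pt s ∈ cyl s := fun _ _ => rfl

lemma cyl_eq_cylinder (s : List Bool) : cyl s = PiNat.cylinder (pt s) s.length := by
  ext f
  simp [cyl, PiNat.mem_cylinder_iff, pt]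

lemma cylinder_eq_cyl (x : Cantor) (n : ℕ) :
    PiNat.cylinder x n = cyl (List.ofFn fun i : Fin n => x i) := by
  ext f
  simp +contextual [cyl, PiNat.mem_cylinder_iff]

lemma isTopologicalBasis_cyl : IsTopologicalBasis (range cyl) := by
  convert PiNat.isTopologicalBasis_cylinders (fun _ : ℕ => Bool)
  ext U
  constructor
  · rintro ⟨s, rfl⟩
    exact ⟨pt s, s.length, cyl_eq_cylinder s⟩
  · rintro ⟨x, n, rfl⟩
    exact ⟨_, (cylinder_eq_cyl x n).symm⟩

lemma isOpen_cyl (s : List Bool) : IsOpen (cyl s) :=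
  isTopologicalBasis_cyl.isOpen (mem_range_self s)

lemma isClosed_cyl (s : List Bool) : IsClosed (cyl s) := by
  rw [cyl_eq_cylinder, PiNat.cylinder_eq_pi]
  exact isClosed_set_pi fun _ _ => isClosed_discrete _

lemma exists_cyl_subset {U : Set Cantor} (hU : IsOpen U) {x : Cantor} (hx : x ∈ U) :
    ∃ s, x ∈ cyl s ∧ cyl s ⊆ U := by
  obtain ⟨_, ⟨s, rfl⟩, hxs, hsU⟩ := isTopologicalBasis_cyl.exists_subset_of_mem_open hx hU
  exact ⟨s, hxs, hsU⟩

lemma cyl_subset_cyl_of_prefix {s t : List Bool} (h : s <+: t) : cyl t ⊆ cyl s := by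
  obtain ⟨r, rfl⟩ := h
  intro f hf i hi
  rw [hf i (by simp; omega), List.getD_append _ _ _ _ hi]

lemma prefix_of_mem_cyl {s t : List Bool} {f : Cantor} (hs : f ∈ cyl s) (ht : f ∈ cyl t)
    (h : s.length ≤ t.length) : s <+: t := by
  rw [List.prefix_iff_eq_take]
  refine List.ext_getElem (by simp [h]) fun i his hit => ?_
  have e1 := hs i his
  have e2 := ht i (his.trans_le h)
  rw [List.getD_eq_getElem _ _ his] at e1
  rw [List.getD_eq_getElem _ _ (his.trans_le h)] at e2
  rw [← e1, e2, List.getElem_take]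

lemma cyl_subset_or_subset {s t : List Bool} (h : (cyl s ∩ cyl t).Nonempty) :
    cyl s ⊆ cyl t ∨ cyl t ⊆ cyl s := by
  obtain ⟨f, hs, ht⟩ := h
  rcases le_total s.length t.length with hst | hts
  · exact Or.inr (cyl_subset_cyl_of_prefix (prefix_of_mem_cyl hs ht hst))
  · exact Or.inl (cyl_subset_cyl_of_prefix (prefix_of_mem_cyl ht hs hts))

lemma exists_cyl_subset_inter {s t : List Bool} (h : (cyl s ∩ cyl t).Nonempty) :
    ∃ u, cyl u ⊆ cyl s ∧ cyl u ⊆ cyl t := by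
  rcases cyl_subset_or_subset h with hst | hts
  · exact ⟨s, subset_rfl, hst⟩
  · exact ⟨t, hts, subset_rfl⟩

lemma exists_cyl_subset_not_mem (s : List Bool) (x : Cantor) :
    ∃ t, cyl t ⊆ cyl s ∧ x ∉ cyl t := by
  refine ⟨s ++ [!x s.length], cyl_subset_cyl_of_prefix (List.prefix_append _ _), fun hx => ?_⟩
  have := hx s.length (by simp)
  simp at this

lemma cohenCls_surjective : Function.Surjective cohenCls := quotCls_surjective

lemma cohenCls_eq_bot_iff {X : BorelSets} : cohenCls X = ⊥ ↔ IsMeagre X.1 := quotCls_eq_bot_iff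

lemma cohenCls_le_iff {X Y : BorelSets} : cohenCls X ≤ cohenCls Y ↔ IsMeagre (X.1 \ Y.1) :=
  quotCls_le_iff

lemma cohenCls_inf (X Y : BorelSets) : cohenCls (X ⊓ Y) = cohenCls X ⊓ cohenCls Y :=
  (quotClsHom meagreIdeal).map_inf' X Y

lemma cohenCls_sup (X Y : BorelSets) : cohenCls (X ⊔ Y) = cohenCls X ⊔ cohenCls Y :=
  (quotClsHom meagreIdeal).map_sup' X Y

lemma cohenCls_mono {X Y : BorelSets} (h : X ≤ Y) : cohenCls X ≤ cohenCls Y :=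
  cohenCls_le_iff.mpr (by rw [sdiff_eq_empty.mpr h]; exact IsMeagre.empty)

lemma subset_of_cohenCls_le {X Y : BorelSets} (hX : IsOpen X.1) (hY : IsClosed Y.1)
    (h : cohenCls X ≤ cohenCls Y) : X.1 ⊆ Y.1 :=
  sdiff_eq_empty.mp <| not_nonempty_iff_eq_empty.mp fun hne =>
    not_isMeagre_of_isOpen (hX.sdiff hY) hne (cohenCls_le_iff.mp h)

lemma cylC_ne_bot (s : List Bool) : cylC s ≠ ⊥ := fun h =>
  not_isMeagre_of_isOpen (isOpen_cyl s) ⟨pt s, pt_mem_cyl s⟩ (cohenCls_eq_bot_iff.mp h)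

lemma cylC_le_cylC {s t : List Bool} (h : cyl s ⊆ cyl t) : cylC s ≤ cylC t :=
  cohenCls_mono h

lemma cyl_subset_of_cylC_le {s t : List Bool} (h : cylC s ≤ cylC t) : cyl s ⊆ cyl t :=
  subset_of_cohenCls_le (isOpen_cyl s) (isClosed_cyl t) h

lemma Filter.EventuallyEq.isMeagre_sdiff {X : Type} [TopologicalSpace X] {s t : Set X}
    (h : s =ᶠ[residual X] t) : IsMeagre (t \ s) := by
  filter_upwards [h] with x hx
  exact fun hxt => hxt.2 ((iff_of_eq hx).mpr hxt.1)

-- Every Borel set is an open set modulo a meagre set.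
lemma exists_cylC_le {b : CohenAlg} (hb : b ≠ ⊥) : ∃ s, cylC s ≤ b := by
  obtain ⟨X, rfl⟩ := cohenCls_surjective b
  obtain ⟨O, hO, hXO⟩ := X.2.residualEq_isOpen
  have hOX : IsMeagre (X.1 \ O) := hXO.symm.isMeagre_sdiff
  obtain ⟨x, hx⟩ : O.Nonempty := nonempty_iff_ne_empty.mpr fun hO => hb <|
    cohenCls_eq_bot_iff.mpr (by simpa [hO] using hOX)
  obtain ⟨s, -, hs⟩ := exists_cyl_subset hO hx
  exact ⟨s, cohenCls_le_iff.mpr (hXO.isMeagre_sdiff.mono (sdiff_subset_sdiff_left hs))⟩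

section MinimalPrefixes

def IsMinPrefix (P : List Bool → Prop) (t : List Bool) : Prop :=
  P t ∧ ∀ s, s <+: t → P s → s = t

def DenseCyl (P : List Bool → Prop) : Prop :=
  ∀ t, ∃ s, cyl s ⊆ cyl t ∧ P s

variable {P : List Bool → Prop}

lemma exists_isMinPrefix_prefix {t : List Bool} (h : P t) : ∃ s, s <+: t ∧ IsMinPrefix P s := by
  by_cases hmin : ∀ s, s <+: t → P s → s = t
  · exact ⟨t, List.prefix_refl t, h, hmin⟩
  · push Not at hmin
    obtain ⟨s, hst, hs, hne⟩ := hmin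
    have : s.length < t.length := lt_of_le_of_ne hst.length_le fun e => hne (hst.eq_of_length e)
    obtain ⟨r, hrs, hr⟩ := exists_isMinPrefix_prefix hs
    exact ⟨r, hrs.trans hst, hr⟩
termination_by t.length

lemma IsMinPrefix.eq_of_inter_nonempty {s t : List Bool} (hs : IsMinPrefix P s)
    (ht : IsMinPrefix P t) (h : (cyl s ∩ cyl t).Nonempty) : s = t := by
  obtain ⟨f, hfs, hft⟩ := h
  rcases le_total s.length t.length with hst | hts
  · exact ht.2 s (prefix_of_mem_cyl hfs hft hst) hs.1
  · exact (hs.2 t (prefix_of_mem_cyl hft hfs hts) ht.1).symm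

lemma DenseCyl.exists_isMinPrefix_inter_nonempty (hP : DenseCyl P) (t : List Bool) :
    ∃ s, IsMinPrefix P s ∧ (cyl t ∩ cyl s).Nonempty := by
  obtain ⟨u, hut, hu⟩ := hP t
  obtain ⟨s, hsu, hs⟩ := exists_isMinPrefix_prefix hu
  exact ⟨s, hs, pt u, hut (pt_mem_cyl u), cyl_subset_cyl_of_prefix hsu (pt_mem_cyl u)⟩

lemma DenseCyl.dense_iUnion (hP : DenseCyl P) : Dense (⋃ (s) (_ : P s), cyl s) := by
  refine isTopologicalBasis_cyl.dense_iff.mpr ?_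
  rintro _ ⟨t, rfl⟩ -
  obtain ⟨s, hst, hs⟩ := hP t
  exact ⟨pt s, hst (pt_mem_cyl s), mem_biUnion hs (pt_mem_cyl s)⟩

lemma maxAC_image_isMinPrefix (hP : DenseCyl P) : MaxAC (cylC '' {t | IsMinPrefix P t}) := by
  refine ⟨⟨?_, ?_⟩, fun b hb => ?_⟩
  · rintro _ ⟨s, -, rfl⟩
    exact cylC_ne_bot s
  · rintro _ ⟨s, hs, rfl⟩ _ ⟨t, ht, rfl⟩ hne
    rw [cylC, cylC, ← cohenCls_inf, cohenCls_eq_bot_iff]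
    convert IsMeagre.empty
    exact not_nonempty_iff_eq_empty.mp fun h => hne (by rw [hs.eq_of_inter_nonempty ht h])
  · obtain ⟨u, hub⟩ := exists_cylC_le hb
    obtain ⟨s, hs, hus⟩ := hP.exists_isMinPrefix_inter_nonempty u
    refine ⟨cylC s, mem_image_of_mem cylC hs, fun h => ?_⟩
    rcases cyl_subset_or_subset hus with hu | hs'
    · exact cylC_ne_bot u (eq_bot_iff.mpr (h ▸ le_inf (cylC_le_cylC hu) hub))
    · exact cylC_ne_bot s (eq_bot_iff.mpr (h ▸ le_inf le_rfl ((cylC_le_cylC hs').trans hub)))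

lemma DenseCyl.isNowhereDense {S : Set Cantor} (h : DenseCyl fun t => Disjoint (cyl t) S) :
    IsNowhereDense S := by
  rw [IsNowhereDense, interior_eq_empty_iff_dense_compl]
  refine h.dense_iUnion.mono (iUnion₂_subset fun s hs => ?_)
  exact subset_compl_iff_disjoint_right.mpr (hs.closure_right (isOpen_cyl s))

-- A cylinder inside `cyl u`, for `u` a minimal prefix, meets the set at most in `pt u`.
lemma isNowhereDense_pt_image_isMinPrefix (P : List Bool → Prop) :
    IsNowhereDense (pt '' {t | IsMinPrefix P t}) := by
  refine DenseCyl.isNowhereDense fun t => ?_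
  by_cases hmeet : ∃ u, IsMinPrefix P u ∧ (cyl t ∩ cyl u).Nonempty
  · obtain ⟨u, hu, htu⟩ := hmeet
    obtain ⟨w, hwt, hwu⟩ := exists_cyl_subset_inter htu
    obtain ⟨v, hvw, hv⟩ := exists_cyl_subset_not_mem w (pt u)
    refine ⟨v, hvw.trans hwt, disjoint_right.mpr ?_⟩
    rintro _ ⟨u', hu', rfl⟩ hv'
    obtain rfl := hu'.eq_of_inter_nonempty hu ⟨pt u', pt_mem_cyl u', hwu (hvw hv')⟩
    exact hv hv'
  · refine ⟨t, subset_rfl, disjoint_right.mpr ?_⟩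
    rintro _ ⟨u, hu, rfl⟩ ht
    exact hmeet ⟨u, hu, pt u, ht, pt_mem_cyl u⟩

end MinimalPrefixes

def CylBelow (A : Set CohenAlg) (t : List Bool) : Prop := ∃ a ∈ A, cylC t ≤ a

lemma MaxAC.denseCyl_cylBelow {A : Set CohenAlg} (hA : MaxAC A) : DenseCyl (CylBelow A) := by
  intro t
  obtain ⟨a, ha, hat⟩ := hA.2 (cylC t) (cylC_ne_bot t)
  obtain ⟨s, hs⟩ := exists_cylC_le hat
  exact ⟨s, cyl_subset_of_cylC_le (hs.trans inf_le_right), a, ha, hs.trans inf_le_left⟩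

def cylAntichain (U : Set Cantor) : Set CohenAlg :=
  cylC '' {t | IsMinPrefix (fun s => cyl s ⊆ U) t}

lemma maxAC_cylAntichain {U : Set Cantor} (hU : IsOpen U) (hd : Dense U) :
    MaxAC (cylAntichain U) := by
  refine maxAC_image_isMinPrefix fun t => ?_
  obtain ⟨x, hxt, hxU⟩ := hd.inter_open_nonempty (cyl t) (isOpen_cyl t) ⟨pt t, pt_mem_cyl t⟩
  obtain ⟨s, hxs, hs⟩ := exists_cyl_subset ((isOpen_cyl t).inter hU) ⟨hxt, hxU⟩
  exact ⟨s, hs.trans inter_subset_left, hs.trans inter_subset_right⟩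

def antichainOfNwd (s : {s : Set Cantor // IsNowhereDense s}) : PartT CohenAlg :=
  ⟨cylAntichain (closure s.1)ᶜ,
    maxAC_cylAntichain isClosed_closure.isOpen_compl (interior_eq_empty_iff_dense_compl.mp s.2)⟩

def ClosedBoundIn (U : Set Cantor) (a : CohenAlg) : Prop :=
  ∃ V, ∃ hV : IsClosed V, V ⊆ U ∧ a ≤ cohenCls ⟨V, hV.measurableSet⟩

lemma closedBoundIn_finsetSup {U : Set Cantor} {F : Finset CohenAlg}
    (hF : ∀ a ∈ F, ClosedBoundIn U a) : ClosedBoundIn U (F.sup id) := by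
  refine Finset.sup_induction ⟨∅, isClosed_empty, empty_subset U, bot_le⟩ ?_ hF
  rintro a ⟨V, hV, hVU, haV⟩ b ⟨W, hW, hWU, hbW⟩
  refine ⟨V ∪ W, hV.union hW, union_subset hVU hWU, ?_⟩
  exact (sup_le_sup haV hbW).trans_eq (cohenCls_sup _ _).symm

lemma closedBoundIn_of_mem_cylAntichain {U : Set Cantor} {a : CohenAlg}
    (ha : a ∈ cylAntichain U) : ClosedBoundIn U a := by
  obtain ⟨s, hs, rfl⟩ := ha
  exact ⟨cyl s, isClosed_cyl s, hs.1, le_rfl⟩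

lemma iUnion_cylBelow_subset {U : Set Cantor} {A C : Set CohenAlg}
    (hA : ∀ a ∈ A, ClosedBoundIn U a) (hAC : Refines A C) :
    ⋃ (t) (_ : CylBelow C t), cyl t ⊆ U := by
  refine iUnion₂_subset fun t ⟨c, hc, htc⟩ => ?_
  obtain ⟨a, ha, hca⟩ := hAC c hc
  obtain ⟨V, hV, hVU, haV⟩ := hA a ha
  exact (subset_of_cohenCls_le (isOpen_cyl t) hV ((htc.trans hca).trans haV)).trans hVU

lemma gt_nwdCantorSys_partStar : GT NwdCantorSys (PartStar CohenAlg) := by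
  refine ⟨antichainOfNwd, fun C => ⟨(⋃ (t) (_ : CylBelow C.1 t), cyl t)ᶜ, ?_⟩, ?_⟩
  · refine (isClosed_isNowhereDense_iff_compl.mpr ?_).2
    rw [compl_compl]
    exact ⟨isOpen_biUnion fun t _ => isOpen_cyl t, C.2.denseCyl_cylBelow.dense_iUnion⟩
  · rintro s C ⟨F, hF, hFC⟩
    have hbound : ∀ a ∈ (cylAntichain (closure s.1)ᶜ \ F) ∪ {F.sup id},
        ClosedBoundIn (closure s.1)ᶜ a := by
      rintro a (ha | rfl)
      · exact closedBoundIn_of_mem_cylAntichain ha.1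
      · exact closedBoundIn_finsetSup fun a ha => closedBoundIn_of_mem_cylAntichain (hF ha)
    exact subset_closure.trans (subset_compl_comm.mp (iUnion_cylBelow_subset hbound hFC))

lemma gt_partSys_nwdCantorSys : GT (PartSys CohenAlg) NwdCantorSys := by
  refine ⟨fun A => ⟨closure (pt '' {t | IsMinPrefix (CylBelow A.1) t}),
      (isNowhereDense_pt_image_isMinPrefix _).closure⟩,
    antichainOfNwd, ?_⟩
  rintro A b hAb _ ⟨s, hs, rfl⟩
  obtain ⟨u, hu, hsu⟩ := A.2.denseCyl_cylBelow.exists_isMinPrefix_inter_nonempty s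
  rcases cyl_subset_or_subset hsu with hsu' | hus
  · obtain ⟨a, ha, hua⟩ := hu.1
    exact ⟨a, ha, (cylC_le_cylC hsu').trans hua⟩
  · have hpt : pt u ∈ b.1 := hAb (subset_closure ⟨u, hu, rfl⟩)
    exact (hs.1 (hus (pt_mem_cyl u)) (subset_closure hpt)).elim

/-- `(nwd(2^ω), ⊆, nwd(2^ω)) ≡_T Part*(ℂ_ω) ≡_T Part(ℂ_ω)`. -/
theorem stmt13 :
    GTequiv NwdCantorSys (PartStar CohenAlg) ∧ GTequiv NwdCantorSys (PartSys CohenAlg) :=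
  ⟨⟨gt_nwdCantorSys_partStar, (gt_partStar_partSys CohenAlg).trans gt_partSys_nwdCantorSys⟩,
    ⟨gt_nwdCantorSys_partStar.trans (gt_partStar_partSys CohenAlg), gt_partSys_nwdCantorSys⟩⟩
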